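/- arXiv:0812.1951 — 4 statements merged into one kernel-verified Lean document; each statement's English description precedes it below -/
import Mathlib

section
/- Let L ⊆ Σ_{r^m}* be a regular language. Then the closure of the convex hull of the regular set of integer vectors ρ(L) is a polyhedral convex set: there exist finitely many pairs (α_1,c_1),…,(α_k,c_k) ∈ ℝ^m × ℝ such that cl(conv(ρ(L))) = ⋂_{j=1}^k {x ∈ ℝ^m : ⟨α_j, x⟩ + c_j ≥ 0}, where ⟨·,·⟩ is the standard scalar product on ℝ^m. -/
/-- The alphabet `Σ_{r^m}` of digit vectors. -/
abbrev Alpha (r m : ℕ) := Fin m → Fin r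
abbrev Word (r m : ℕ) := List (Alpha r m)

/-- `ρ(b₁⋯bₙ) = Σᵢ r^(i-1)·bᵢ` (least significant digit first), viewed in `ℝ^m`. -/
noncomputable def rho (r m : ℕ) : Word r m → (Fin m → ℝ)
  | [] => 0
  | b :: w => (fun j => (b j : ℝ)) + (r : ℝ) • rho r m w

/-- `Γ_σ(x) = r^|σ|·x + ρ(σ)`. -/
noncomputable def Gam (r m : ℕ) (σ : Word r m) (x : Fin m → ℝ) : Fin m → ℝ :=
  (r : ℝ) ^ σ.length • x + rho r m σ

/-- The inverse bijection `Γ_σ⁻¹(y) = (y - ρ(σ))/r^|σ|`. -/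
noncomputable def GamInv (r m : ℕ) (σ : Word r m) (y : Fin m → ℝ) : Fin m → ℝ :=
  ((r : ℝ) ^ σ.length)⁻¹ • (y - rho r m σ)

/-- `ξ(σ) = ρ(σ)/(1 - r^|σ|)` (meaningful for nonempty `σ`). -/
noncomputable def xi (r m : ℕ) (σ : Word r m) : Fin m → ℝ :=
  (1 - (r : ℝ) ^ σ.length)⁻¹ • rho r m σ

/-- `ρ(L) = {ρ(σ) : σ ∈ L}`. -/
def rhoSet (r m : ℕ) (L : Set (Word r m)) : Set (Fin m → ℝ) :=
  {x | ∃ σ ∈ L, x = rho r m σ}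

/-- `ξ(L) = {ξ(σ) : σ ∈ L, σ ≠ ε}`. -/
def xiSet (r m : ℕ) (L : Set (Word r m)) : Set (Fin m → ℝ) :=
  {x | ∃ σ ∈ L, σ ≠ [] ∧ x = xi r m σ}

/-- Kleene star of a language. -/
def kstar' {α : Type*} (L : Set (List α)) : Set (List α) :=
  {w | ∃ ws : List (List α), (∀ u ∈ ws, u ∈ L) ∧ w = ws.flatten}

/-- Concatenation of two languages. -/
def catL {α : Type*} (A B : Set (List α)) : Set (List α) :=
  {w | ∃ a ∈ A, ∃ b ∈ B, w = a ++ b}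

/-- `chainLang σ Ls n = σ_{n+1}·(L_n)*·σ_n ⋯ (L_1)*·σ_1`. -/
def chainLang {α : Type*} (σ : ℕ → List α) (Ls : ℕ → Set (List α)) : ℕ → Set (List α)
  | 0 => {σ 1}
  | n + 1 => catL {σ (n + 2)} (catL (kstar' (Ls (n + 1))) (chainLang σ Ls n))

/-- `catDown σ hi lo = σ_hi·σ_{hi-1}⋯σ_lo` (empty if `lo > hi`). -/
def catDown {α : Type*} (σ : ℕ → List α) (hi lo : ℕ) : List α :=
  ((List.range (hi + 1 - lo)).map fun j => σ (hi - j)).flatten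

/-- `catUp σ k = σ_1·σ_2⋯σ_k`. -/
def catUp {α : Type*} (σ : ℕ → List α) (k : ℕ) : List α :=
  ((List.range k).map fun j => σ (j + 1)).flatten

/-- `σ^k`, the `k`-fold concatenation of `σ`. -/
def repK {α : Type*} (σ : List α) (k : ℕ) : List α := (List.replicate k σ).flatten

/-- `ℝ₋·X = {t·x : t ≤ 0, x ∈ X}`. -/
def negSmul {m : ℕ} (X : Set (Fin m → ℝ)) : Set (Fin m → ℝ) :=
  {y | ∃ t : ℝ, t ≤ 0 ∧ ∃ x ∈ X, y = t • x}

/-- The cone `C(R)` generated by a finite set of rays. -/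
def coneOf {m : ℕ} (R : Finset ((Fin m → ℝ) × ℝ)) : Set ((Fin m → ℝ) × ℝ) :=
  {y | ∃ t : ((Fin m → ℝ) × ℝ) → ℝ, (∀ p, 0 ≤ t p) ∧ y = ∑ p ∈ R, t p • p}

/-- The polyhedral convex set `P(R) = {x : (x,1) ∈ C(R)}`. -/
def polyOf {m : ℕ} (R : Finset ((Fin m → ℝ) × ℝ)) : Set (Fin m → ℝ) :=
  {x | (x, (1 : ℝ)) ∈ coneOf R}

/-!
Let `M` be a DFA with `N` states recognising `L`. Pumping an accepted word `abc` down to `ac`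
changes `ρ` by `ρ(abc) - ρ(ac) = r^|a| (r^|b| - 1) (ρ(c) - ξ(b))`, so `ρ(L) ⊆ conv F + cone G`,
where `F` consists of the `ρ(w)` for accepted words shorter than `N` and `G` of the directions
`ρ(z) - ξ(y)` of short pumping pairs (`y` loops at a reachable state from which `z` is accepted);
the direction of a long pumping pair is a nonnegative combination of short ones by the same
identity. Conversely, `ρ(z) - ξ(y)` is the limit of `ρ(x yᵏ z) / r^(|x| + k|y|)`, hence a
recession direction of `cl conv ρ(L)`. So `cl conv ρ(L) = conv F + cone G`, which is polyhedral
by Fourier–Motzkin elimination.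
-/

open Filter Topology Pointwise

theorem Finset.exists_between_of_forall_le {α : Type*} [LinearOrder α] [Nonempty α]
    {s t : Finset α} (h : ∀ x ∈ s, ∀ y ∈ t, x ≤ y) :
    ∃ b, (∀ x ∈ s, x ≤ b) ∧ ∀ y ∈ t, b ≤ y := by
  by_cases hs : s.Nonempty
  · exact ⟨s.max' hs, fun x hx => s.le_max' x hx, fun y hy => s.max'_le hs y (h · · y hy)⟩
  by_cases ht : t.Nonempty
  · exact ⟨t.min' ht, by simp_all, fun y hy => t.min'_le y hy⟩
  · exact Nonempty.elim ‹_› fun b => ⟨b, by simp_all⟩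

theorem exists_forall_add_mul_le_iff {ι : Type*} (s : Finset ι) (a d c : ι → ℝ) :
    (∃ t, ∀ i ∈ s, a i + d i * t ≤ c i) ↔
      (∀ i ∈ s, d i = 0 → a i ≤ c i) ∧
        ∀ i ∈ s, d i < 0 → ∀ j ∈ s, 0 < d j → d j * a i - d i * a j ≤ d j * c i - d i * c j := by
  classical
  constructor
  · rintro ⟨t, ht⟩
    refine ⟨fun i hi hd => by simpa [hd] using ht i hi, fun i hi hdi j hj hdj => ?_⟩
    nlinarith [ht i hi, ht j hj]
  rintro ⟨hzero, hpair⟩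
  -- `a i + d i * t ≤ c i` bounds `t` below if `d i < 0` and above if `0 < d i`
  obtain ⟨t, hlow, hup⟩ := Finset.exists_between_of_forall_le
    (s := (s.filter (d · < 0)).image fun i => (c i - a i) / d i)
    (t := (s.filter (0 < d ·)).image fun j => (c j - a j) / d j) (by
      simp only [Finset.mem_image, Finset.mem_filter]
      rintro _ ⟨i, ⟨hi, hdi⟩, rfl⟩ _ ⟨j, ⟨hj, hdj⟩, rfl⟩
      rw [div_le_iff_of_neg hdi, div_mul_eq_mul_div, div_le_iff₀ hdj]
      nlinarith [hpair i hi hdi j hj hdj])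
  refine ⟨t, fun i hi => ?_⟩
  rcases lt_trichotomy (d i) 0 with hd | hd | hd
  · have := hlow _ (Finset.mem_image_of_mem _ (Finset.mem_filter.2 ⟨hi, hd⟩))
    rw [div_le_iff_of_neg hd] at this
    linarith
  · simpa [hd] using hzero i hi hd
  · have := hup _ (Finset.mem_image_of_mem _ (Finset.mem_filter.2 ⟨hi, hd⟩))
    rw [le_div_iff₀ hd] at this
    linarith

section Polyhedral

variable {E F : Type*} [AddCommGroup E] [Module ℝ E] [AddCommGroup F] [Module ℝ F]

def IsPolyhedral (S : Set E) : Prop :=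
  ∃ s : Finset (Module.Dual ℝ E × ℝ), S = {x | ∀ p ∈ s, p.1 x ≤ p.2}

theorem isPolyhedral_setOf_forall_le {ι : Type*} [Finite ι] (φ : ι → Module.Dual ℝ E)
    (c : ι → ℝ) : IsPolyhedral {x | ∀ i, φ i x ≤ c i} := by
  classical
  refine ⟨(Set.finite_range fun i => (φ i, c i)).toFinset, ?_⟩
  ext x
  simp

theorem isPolyhedral_setOf_le (φ : Module.Dual ℝ E) (c : ℝ) : IsPolyhedral {x | φ x ≤ c} := by
  simpa using isPolyhedral_setOf_forall_le (fun _ : Unit => φ) fun _ => c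

theorem isPolyhedral_nonneg (ι : Type*) [Finite ι] : IsPolyhedral {f : ι → ℝ | ∀ i, 0 ≤ f i} := by
  simpa using isPolyhedral_setOf_forall_le (fun i => -LinearMap.proj (R := ℝ) i) 0

theorem isPolyhedral_singleton_zero [FiniteDimensional ℝ E] : IsPolyhedral ({0} : Set E) := by
  let b := Module.finBasis ℝ E
  convert isPolyhedral_setOf_forall_le (Sum.elim b.coord fun i => -b.coord i) 0 using 1
  ext x
  simp only [Set.mem_singleton_iff, Set.mem_ofPred_eq, Sum.forall, Sum.elim_inl, Sum.elim_inr,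
    Pi.zero_apply, LinearMap.neg_apply, neg_nonpos, ← forall_and, ← le_antisymm_iff]
  exact b.forall_coord_eq_zero_iff.symm

theorem IsPolyhedral.inter {S T : Set E} (hS : IsPolyhedral S) (hT : IsPolyhedral T) :
    IsPolyhedral (S ∩ T) := by
  classical
  obtain ⟨s, rfl⟩ := hS
  obtain ⟨t, rfl⟩ := hT
  refine ⟨s ∪ t, ?_⟩
  ext x
  simp [or_imp, forall_and]

theorem isPolyhedral_setOf_eq (φ : Module.Dual ℝ E) (c : ℝ) : IsPolyhedral {x | φ x = c} := by
  convert (isPolyhedral_setOf_le φ c).inter (isPolyhedral_setOf_le (-φ) (-c)) using 1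
  ext x
  simp [le_antisymm_iff]

theorem isPolyhedral_stdSimplex (ι : Type*) [Fintype ι] : IsPolyhedral (stdSimplex ℝ ι) := by
  convert (isPolyhedral_nonneg ι).inter (isPolyhedral_setOf_eq (∑ i, LinearMap.proj i) 1) using 1
  ext f
  simp [stdSimplex]

theorem IsPolyhedral.preimage {S : Set F} (hS : IsPolyhedral S) (T : E →ₗ[ℝ] F) :
    IsPolyhedral (T ⁻¹' S) := by
  classical
  obtain ⟨s, rfl⟩ := hS
  refine ⟨s.image fun p => (p.1 ∘ₗ T, p.2), ?_⟩
  ext x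
  simp only [Set.mem_preimage, Set.mem_ofPred_eq, Finset.forall_mem_image, LinearMap.comp_apply]

theorem IsPolyhedral.image_linearEquiv {S : Set E} (hS : IsPolyhedral S) (e : E ≃ₗ[ℝ] F) :
    IsPolyhedral (e '' S) := by
  rw [e.image_eq_preimage_symm]
  exact hS.preimage e.symm.toLinearMap

theorem IsPolyhedral.prod {S : Set E} {T : Set F} (hS : IsPolyhedral S) (hT : IsPolyhedral T) :
    IsPolyhedral (S ×ˢ T) :=
  (hS.preimage (LinearMap.fst ℝ E F)).inter (hT.preimage (LinearMap.snd ℝ E F))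

theorem IsPolyhedral.convex {S : Set E} (hS : IsPolyhedral S) : Convex ℝ S := by
  obtain ⟨s, rfl⟩ := hS
  intro x hx y hy a b ha hb hab p hp
  have := add_le_add (mul_le_mul_of_nonneg_left (hx p hp) ha)
    (mul_le_mul_of_nonneg_left (hy p hp) hb)
  simpa [← add_mul, hab] using this

theorem IsPolyhedral.isClosed [TopologicalSpace E] [IsTopologicalAddGroup E]
    [ContinuousSMul ℝ E] [T2Space E] [FiniteDimensional ℝ E] {S : Set E} (hS : IsPolyhedral S) :
    IsClosed S := by
  obtain ⟨s, rfl⟩ := hS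
  simp only [Set.ofPred_forall]
  exact isClosed_biInter fun p _ =>
    isClosed_le (LinearMap.continuous_of_finiteDimensional p.1) continuous_const

/-- Fourier–Motzkin elimination. -/
theorem IsPolyhedral.image_fst {S : Set (E × ℝ)} (hS : IsPolyhedral S) :
    IsPolyhedral (Prod.fst '' S) := by
  classical
  obtain ⟨s, rfl⟩ := hS
  let φ (p : Module.Dual ℝ (E × ℝ) × ℝ) : Module.Dual ℝ E := p.1 ∘ₗ LinearMap.inl ℝ E ℝ
  let d (p : Module.Dual ℝ (E × ℝ) × ℝ) : ℝ := p.1 (0, 1)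
  have hsplit : ∀ p x t, p.1 (x, t) = φ p x + d p * t := fun p x t => by
    rw [show ((x, t) : E × ℝ) = (x, 0) + t • (0, 1) by simp, map_add, map_smul, smul_eq_mul,
      mul_comm]
    rfl
  refine ⟨(s.filter (d · = 0)).image (fun p => (φ p, p.2)) ∪
    Finset.image₂ (fun p q => (d q • φ p - d p • φ q, d q * p.2 - d p * q.2))
      (s.filter (d · < 0)) (s.filter (0 < d ·)), ?_⟩
  ext x
  simp only [Set.mem_image, Set.mem_ofPred_eq, Prod.exists, exists_and_right, exists_eq_right,
    hsplit, Finset.forall_mem_union, Finset.forall_mem_image, Finset.forall_mem_image₂,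
    Finset.mem_filter, and_imp, LinearMap.sub_apply, LinearMap.smul_apply, smul_eq_mul]
  exact exists_forall_add_mul_le_iff s (fun p => φ p x) d Prod.snd

theorem IsPolyhedral.image_fst_pi {n : ℕ} {S : Set (E × (Fin n → ℝ))} (hS : IsPolyhedral S) :
    IsPolyhedral (Prod.fst '' S) := by
  induction n generalizing E with
  | zero => exact hS.image_linearEquiv (LinearEquiv.prodUnique (R := ℝ))
  | succ n ih =>
    let e : (E × (Fin (n + 1) → ℝ)) ≃ₗ[ℝ] (E × ℝ) × (Fin n → ℝ) :=
      (LinearEquiv.prodCongr (LinearEquiv.refl ℝ E) (Fin.consLinearEquiv ℝ fun _ => ℝ).symm).trans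
        (LinearEquiv.prodAssoc ℝ E ℝ (Fin n → ℝ)).symm
    convert (ih (hS.image_linearEquiv e)).image_fst using 1
    rw [Set.image_image, Set.image_image]
    rfl

theorem IsPolyhedral.image [FiniteDimensional ℝ E] [FiniteDimensional ℝ F] {S : Set E}
    (hS : IsPolyhedral S) (T : E →ₗ[ℝ] F) : IsPolyhedral (T '' S) := by
  let e := (Module.finBasis ℝ E).equivFun
  let p : F × (Fin (Module.finrank ℝ E) → ℝ) →ₗ[ℝ] E := e.symm.toLinearMap ∘ₗ LinearMap.snd ℝ _ _
  -- `T '' S` is the projection of the graph of `T` over `S`, in coordinates for `E`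
  have hgraph : IsPolyhedral
      (⇑(LinearMap.fst ℝ F (Fin (Module.finrank ℝ E) → ℝ) - T ∘ₗ p) ⁻¹' {0} ∩ p ⁻¹' S) :=
    (isPolyhedral_singleton_zero.preimage _).inter (hS.preimage _)
  convert hgraph.image_fst_pi using 1
  ext y
  simp only [p, Set.mem_image, Set.mem_inter_iff, Set.mem_preimage, Set.mem_singleton_iff,
    LinearMap.sub_apply, sub_eq_zero, Prod.exists, exists_and_right, exists_eq_right]
  simp [e.symm.surjective.exists, eq_comm, and_comm]

theorem IsPolyhedral.add [FiniteDimensional ℝ E] {S T : Set E} (hS : IsPolyhedral S)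
    (hT : IsPolyhedral T) : IsPolyhedral (S + T) := by
  rw [← Set.add_image_prod]
  exact (hS.prod hT).image (LinearMap.fst ℝ E E + LinearMap.snd ℝ E E)

theorem Set.Finite.isPolyhedral_convexHull [FiniteDimensional ℝ E] {s : Set E} (hs : s.Finite) :
    IsPolyhedral (convexHull ℝ s) := by
  let := hs.fintype
  rw [hs.convexHull_eq_image]
  exact (isPolyhedral_stdSimplex s).image _

theorem isPolyhedral_hull_range [FiniteDimensional ℝ E] {ι : Type*} [Fintype ι] (v : ι → E) :
    IsPolyhedral (PointedCone.hull ℝ (Set.range v) : Set E) := by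
  convert (isPolyhedral_nonneg ι).image (∑ i, (LinearMap.proj (R := ℝ) i).smulRight (v i))
  ext y
  rw [SetLike.mem_coe, Submodule.mem_span_range_iff_exists_fun]
  simp only [LinearMap.coe_sum, LinearMap.coe_smulRight, LinearMap.coe_proj, Function.eval,
    Finset.sum_apply, Set.mem_image, Set.mem_ofPred_eq]
  constructor
  · rintro ⟨c, rfl⟩
    exact ⟨fun i => c i, fun i => (c i).2, rfl⟩
  · rintro ⟨c, hc, rfl⟩
    exact ⟨fun i => ⟨c i, hc i⟩, rfl⟩

theorem Set.Finite.isPolyhedral_hull [FiniteDimensional ℝ E] {s : Set E} (hs : s.Finite) :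
    IsPolyhedral (PointedCone.hull ℝ s : Set E) := by
  let := hs.fintype
  simpa using isPolyhedral_hull_range ((↑) : s → E)

theorem IsPolyhedral.exists_fin_halfspaces {m : ℕ} {S : Set (Fin m → ℝ)} (hS : IsPolyhedral S) :
    ∃ (k : ℕ) (α : Fin k → (Fin m → ℝ)) (c : Fin k → ℝ),
      S = ⋂ j : Fin k, {x : Fin m → ℝ | (∑ i, α j i * x i) + c j ≥ 0} := by
  obtain ⟨s, rfl⟩ := hS
  let p := s.equivFin.symm
  refine ⟨s.card, fun j i => -(p j).1.1 (Pi.single i 1), fun j => (p j).1.2, ?_⟩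
  ext x
  have hx (φ : Module.Dual ℝ (Fin m → ℝ)) : φ x = ∑ i, φ (Pi.single i 1) * x i := by
    conv_lhs => rw [← Finset.univ_sum_single x]
    simp only [map_sum]
    congr 1 with i
    rw [mul_comm, ← smul_eq_mul, ← map_smul, ← Pi.single_smul, smul_eq_mul, mul_one]
  simp only [Set.mem_ofPred_eq, Set.mem_iInter, ge_iff_le, neg_mul, Finset.sum_neg_distrib,
    ← sub_eq_neg_add, sub_nonneg, ← hx]
  exact ((p.forall_congr_right (q := fun y : s => y.1.1 x ≤ y.1.2)).trans (s.forall_coe _)).symm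

end Polyhedral

section Recession

variable {E : Type*} [AddCommGroup E] [Module ℝ E]

def recessionCone (K : Set E) : PointedCone ℝ E where
  carrier := {v | ∀ x ∈ K, ∀ t : ℝ, 0 ≤ t → x + t • v ∈ K}
  zero_mem' := by simp +contextual
  add_mem' {u v} hu hv x hx t ht := by
    simpa [smul_add, add_assoc] using hv _ (hu x hx t ht) t ht
  smul_mem' c v hv x hx t ht := by
    simpa [← Nonneg.coe_smul, smul_smul] using hv x hx (t * c) (mul_nonneg ht c.2)

theorem add_mem_of_mem_recessionCone {K : Set E} {x v : E} (hx : x ∈ K)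
    (hv : v ∈ recessionCone K) : x + v ∈ K := by
  simpa using hv x hx 1 zero_le_one

theorem mem_recessionCone_of_tendsto [TopologicalSpace E] [IsTopologicalAddGroup E]
    [ContinuousSMul ℝ E] {K : Set E} (hK : Convex ℝ K) (hKc : IsClosed K) {α : Type*}
    {l : Filter α} [l.NeBot] {d : α → E} {μ : α → ℝ} {v : E} (hd : ∀ a, d a ∈ K)
    (hμ : ∀ a, 0 ≤ μ a) (hμ0 : Tendsto μ l (𝓝 0)) (hv : Tendsto (fun a => μ a • d a) l (𝓝 v)) :
    v ∈ recessionCone K := by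
  intro x hx t ht
  have htμ : Tendsto (fun a => t * μ a) l (𝓝 0) := by simpa using hμ0.const_mul t
  have hlim : Tendsto (fun a => (1 - t * μ a) • x + (t * μ a) • d a) l (𝓝 (x + t • v)) := by
    convert ((tendsto_const_nhds.sub htμ).smul_const x).add (hv.const_smul t) using 2 with a
    · rw [smul_smul]
    · simp
  refine hKc.mem_of_tendsto hlim ?_
  filter_upwards [htμ.eventually (eventually_le_nhds one_pos)] with a ha
  exact hK hx (hd a) (by linarith) (mul_nonneg ht (hμ a)) (by ring)

end Recession

section Words

variable {r m : ℕ}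

theorem rho_append (u v : Word r m) : rho r m (u ++ v) = Gam r m u (rho r m v) := by
  induction u with
  | nil => simp [Gam, rho]
  | cons b u ih =>
    simp only [List.cons_append, rho, ih, Gam, List.length_cons, pow_succ]
    module

theorem one_lt_pow_length (hr : 1 < r) {u : Word r m} (hu : u ≠ []) :
    (1 : ℝ) < (r : ℝ) ^ u.length :=
  one_lt_pow₀ (by exact_mod_cast hr) (List.length_pos_iff.2 hu).ne'

theorem pow_length_mul_pow_length_sub_one_nonneg (hr : 1 ≤ r) (a b : Word r m) :
    0 ≤ (r : ℝ) ^ a.length * ((r : ℝ) ^ b.length - 1) :=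
  mul_nonneg (by positivity) (sub_nonneg.2 (one_le_pow₀ (by exact_mod_cast hr)))

theorem Gam_sub_xi (hr : 1 < r) (u : Word r m) (v : Fin m → ℝ) :
    Gam r m u v - xi r m u = ((r : ℝ) ^ u.length) • (v - xi r m u) := by
  rcases eq_or_ne u [] with rfl | hu
  · simp [Gam, xi, rho]
  simp only [Gam, xi]
  set R : ℝ := (r : ℝ) ^ u.length
  have hR : 1 - R ≠ 0 := (sub_neg.2 (one_lt_pow_length hr hu)).ne
  have h : R * (1 - R)⁻¹ = (1 - R)⁻¹ - 1 := by
    field_simp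
    ring
  simp only [smul_sub, smul_smul, h]
  module

theorem rho_append_sub_rho (hr : 1 < r) (u w : Word r m) :
    rho r m (u ++ w) - rho r m w = ((r : ℝ) ^ u.length - 1) • (rho r m w - xi r m u) := by
  rw [rho_append, sub_smul, one_smul, ← Gam_sub_xi hr]
  abel

theorem rho_append_append_sub (hr : 1 < r) (a b c : Word r m) :
    rho r m (a ++ b ++ c) - rho r m (a ++ c) =
      ((r : ℝ) ^ a.length * ((r : ℝ) ^ b.length - 1)) • (rho r m c - xi r m b) := by
  rw [mul_smul, ← rho_append_sub_rho hr, List.append_assoc, rho_append a, rho_append a]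
  simp only [Gam]
  module

theorem repK_succ {α : Type*} (y : List α) (k : ℕ) : repK y (k + 1) = y ++ repK y k := by
  simp [repK, List.replicate_succ]

theorem rho_repK_append_sub_xi (hr : 1 < r) (y z : Word r m) (k : ℕ) :
    rho r m (repK y k ++ z) - xi r m y = ((r : ℝ) ^ y.length) ^ k • (rho r m z - xi r m y) := by
  induction k with
  | zero => simp [repK]
  | succ k ih =>
    rw [repK_succ, List.append_assoc, rho_append, Gam_sub_xi hr, ih, smul_smul, pow_succ']

end Words

theorem rho_sub_xi_mem_recessionCone {r m : ℕ} (hr : 1 < r) {L : Set (Word r m)}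
    {x y z : Word r m} (hy : y ≠ []) (hL : ∀ k, x ++ (repK y k ++ z) ∈ L) :
    rho r m z - xi r m y ∈ recessionCone (closure (convexHull ℝ (rhoSet r m L))) := by
  set a : ℝ := (r : ℝ) ^ x.length
  set R : ℝ := (r : ℝ) ^ y.length
  have ha : 0 < a := pow_pos (by positivity) _
  let μ : ℕ → ℝ := fun k => (a * R ^ k)⁻¹
  have hμ0 : Tendsto μ atTop (𝓝 0) := tendsto_inv_atTop_zero.comp
    ((tendsto_pow_atTop_atTop_of_one_lt (one_lt_pow_length hr hy)).const_mul_atTop ha)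
  have hscaled (k : ℕ) : μ k • rho r m (x ++ (repK y k ++ z)) =
      μ k • (rho r m x + a • xi r m y) + (rho r m z - xi r m y) := by
    have hμk : μ k * (a * R ^ k) = 1 := inv_mul_cancel₀ (by positivity)
    calc μ k • rho r m (x ++ (repK y k ++ z))
        = μ k • (rho r m x + a • xi r m y) + (μ k * (a * R ^ k)) • (rho r m z - xi r m y) := by
          rw [rho_append, Gam, ← sub_add_cancel (rho r m (repK y k ++ z)) (xi r m y),
            rho_repK_append_sub_xi hr]
          module
      _ = _ := by rw [hμk, one_smul]
  refine mem_recessionCone_of_tendsto (convex_convexHull ℝ _).closure isClosed_closure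
    (fun k => subset_closure (subset_convexHull ℝ _ ⟨_, hL k, rfl⟩)) (fun k => by positivity) hμ0 ?_
  simp_rw [hscaled]
  simpa using (hμ0.smul_const (rho r m x + a • xi r m y)).add_const (rho r m z - xi r m y)

theorem DFA.eval_append {α σ : Type*} (M : DFA α σ) (x y : List α) :
    M.eval (x ++ y) = M.evalFrom (M.eval x) y :=
  M.evalFrom_of_append _ x y

section Pumping

variable {r m : ℕ} {σ : Type*} (M : DFA (Alpha r m) σ)

def IsPumpingPair (y z : Word r m) : Prop :=
  y ≠ [] ∧ ∃ x, M.evalFrom (M.eval x) y = M.eval x ∧ M.evalFrom (M.eval x) z ∈ M.accept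

variable {M} in
theorem IsPumpingPair.exists_forall_mem_accepts {y z : Word r m} (h : IsPumpingPair M y z) :
    ∃ x, ∀ k, x ++ (repK y k ++ z) ∈ M.accepts := by
  obtain ⟨-, x, hloop, hacc⟩ := h
  refine ⟨x, fun k => ?_⟩
  have hpow : M.evalFrom (M.eval x) (repK y k) = M.eval x := by
    induction k with
    | zero => rfl
    | succ k ih => rw [repK_succ, DFA.evalFrom_of_append, hloop, ih]
  rwa [DFA.mem_accepts, DFA.eval_append, DFA.evalFrom_of_append, hpow]

def pumpingDirs (n : ℕ) : Set (Fin m → ℝ) :=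
  (fun p : Word r m × Word r m => rho r m p.2 - xi r m p.1) ''
    {p | IsPumpingPair M p.1 p.2 ∧ p.1.length ≤ n ∧ p.2.length < n}

theorem finite_pumpingDirs (n : ℕ) : (pumpingDirs M n).Finite :=
  (((List.finite_length_le _ n).prod (List.finite_length_lt _ n)).subset
    fun _ hp => ⟨hp.2.1, hp.2.2⟩).image _

theorem pumpingDirs_subset_recessionCone (hr : 1 < r) (n : ℕ) :
    pumpingDirs M n ⊆ recessionCone (closure (convexHull ℝ (rhoSet r m M.accepts))) := by
  rintro _ ⟨⟨y, z⟩, ⟨h, -⟩, rfl⟩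
  obtain ⟨x, hx⟩ := h.exists_forall_mem_accepts
  exact rho_sub_xi_mem_recessionCone hr h.1 hx

variable [Fintype σ]

theorem rho_sub_xi_mem_hull_of_length_le (hr : 1 < r) {y z : Word r m}
    (h : IsPumpingPair M y z) (hy : y.length ≤ Fintype.card σ) :
    rho r m z - xi r m y ∈ PointedCone.hull ℝ (pumpingDirs M (Fintype.card σ)) := by
  induction hz : z.length using Nat.strong_induction_on generalizing y z with
  | _ n ih =>
  obtain ⟨hy0, x, hloop, hacc⟩ := h
  by_cases hzN : z.length < Fintype.card σ
  · exact PointedCone.subset_hull ⟨(y, z), ⟨⟨hy0, x, hloop, hacc⟩, hy, hzN⟩, rfl⟩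
  obtain ⟨q, a, b, c, rfl, hab, hb, ha, hbq, hc⟩ := M.evalFrom_split (not_lt.1 hzN) rfl
  have hblen := List.length_pos_iff.2 hb
  simp only [List.length_append] at hz
  have hsplit : rho r m (a ++ b ++ c) - xi r m y = (rho r m (a ++ c) - xi r m y) +
      ((r : ℝ) ^ a.length * ((r : ℝ) ^ b.length - 1)) • (rho r m c - xi r m b) := by
    rw [← rho_append_append_sub hr]
    abel
  rw [hsplit]
  refine add_mem (ih (a ++ c).length (by simp only [List.length_append]; omega)
      ⟨hy0, x, hloop, ?_⟩ hy rfl)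
    (PointedCone.smul_mem _ (pow_length_mul_pow_length_sub_one_nonneg hr.le a b)
      (ih c.length (by omega) ⟨hb, x ++ a, ?_, ?_⟩ (by omega) rfl))
  · rwa [DFA.evalFrom_of_append, ha, hc]
  · rwa [DFA.eval_append, ha]
  · rwa [DFA.eval_append, ha, hc]

theorem rho_sub_xi_mem_hull (hr : 1 < r) {y z : Word r m} (h : IsPumpingPair M y z) :
    rho r m z - xi r m y ∈ PointedCone.hull ℝ (pumpingDirs M (Fintype.card σ)) := by
  induction hn : y.length using Nat.strong_induction_on generalizing y z with
  | _ n ih =>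
  by_cases hyN : y.length ≤ Fintype.card σ
  · exact rho_sub_xi_mem_hull_of_length_le M hr h hyN
  obtain ⟨hy0, x, hloop, hacc⟩ := h
  obtain ⟨q, a, b, c, rfl, hab, hb, ha, hbq, hc⟩ := M.evalFrom_split (le_of_not_ge hyN) hloop
  have hblen := List.length_pos_iff.2 hb
  simp only [List.length_append] at hn hyN
  have hac : a ++ c ≠ [] := fun h => by
    simp only [List.append_eq_nil_iff] at h
    simp only [h.2, List.length_nil] at hyN
    omega
  have hpos : 0 < (r : ℝ) ^ (a ++ b ++ c).length - 1 :=
    sub_pos.2 (one_lt_pow_length hr (by simp [hb]))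
  -- `(r^|y| - 1) • (ρ(z) - ξ(y)) = ρ(yz) - ρ(z)` splits along `y = abc` into the pairs
  -- `(ac, z)` and `(b, cz)`
  have key : ((r : ℝ) ^ (a ++ b ++ c).length - 1) • (rho r m z - xi r m (a ++ b ++ c)) =
      ((r : ℝ) ^ (a ++ c).length - 1) • (rho r m z - xi r m (a ++ c)) +
        ((r : ℝ) ^ a.length * ((r : ℝ) ^ b.length - 1)) • (rho r m (c ++ z) - xi r m b) := by
    rw [← rho_append_sub_rho hr, ← rho_append_sub_rho hr, ← rho_append_append_sub hr]
    simp only [List.append_assoc]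
    abel
  rw [← inv_smul_smul₀ hpos.ne' (rho r m z - xi r m (a ++ b ++ c)), key]
  refine PointedCone.smul_mem _ (inv_nonneg.2 hpos.le) (add_mem
    (PointedCone.smul_mem _ (sub_nonneg.2 (one_lt_pow_length hr hac).le)
      (ih (a ++ c).length (by simp only [List.length_append]; omega) ⟨hac, x, ?_, hacc⟩ rfl))
    (PointedCone.smul_mem _ (pow_length_mul_pow_length_sub_one_nonneg hr.le a b)
      (rho_sub_xi_mem_hull_of_length_le M hr ⟨hb, x ++ a, ?_, ?_⟩ (by omega))))
  · rw [DFA.evalFrom_of_append, ha, hc]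
  · rwa [DFA.eval_append, ha]
  · rwa [DFA.eval_append, ha, DFA.evalFrom_of_append, hc]

theorem rho_mem_convexHull_add_hull (hr : 1 < r) {w : Word r m} (hw : w ∈ M.accepts) :
    rho r m w ∈ convexHull ℝ (rho r m '' {w | w ∈ M.accepts ∧ w.length < Fintype.card σ}) +
      (PointedCone.hull ℝ (pumpingDirs M (Fintype.card σ)) : Set (Fin m → ℝ)) := by
  induction hn : w.length using Nat.strong_induction_on generalizing w with
  | _ n ih =>
  by_cases hwN : w.length < Fintype.card σ
  · exact ⟨rho r m w, subset_convexHull ℝ _ ⟨w, ⟨hw, hwN⟩, rfl⟩, 0, zero_mem _, add_zero _⟩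
  obtain ⟨q, a, b, c, rfl, hab, hb, ha, hbq, hc⟩ :=
    M.evalFrom_split (s := M.start) (not_lt.1 hwN) rfl
  have hblen := List.length_pos_iff.2 hb
  simp only [List.length_append] at hn
  obtain ⟨u, hu, v, hv, huv⟩ := Set.mem_add.1 <|
    ih (a ++ c).length (by simp only [List.length_append]; omega)
      (by rwa [DFA.mem_accepts, DFA.eval, DFA.evalFrom_of_append, ha, hc]) rfl
  refine Set.mem_add.2 ⟨u, hu, v + ((r : ℝ) ^ a.length * ((r : ℝ) ^ b.length - 1)) •
    (rho r m c - xi r m b), add_mem hv (PointedCone.smul_mem _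
      (pow_length_mul_pow_length_sub_one_nonneg hr.le a b)
      (rho_sub_xi_mem_hull M hr ⟨hb, a, ?_, ?_⟩)), ?_⟩
  · rwa [DFA.eval, ha]
  · rwa [DFA.eval, ha, hc]
  · rw [← add_assoc, huv, ← rho_append_append_sub hr, add_sub_cancel]

end Pumping

theorem closure_convexHull_regular_eq_iInter_halfspaces_general
    (r m : ℕ) (hr : 2 ≤ r)
    (L : Set (Word r m)) (hL : Language.IsRegular L) :
    ∃ (k : ℕ) (α : Fin k → (Fin m → ℝ)) (c : Fin k → ℝ),
      closure (convexHull ℝ (rhoSet r m L)) =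
        ⋂ j : Fin k, {x : Fin m → ℝ | (∑ i, α j i * x i) + c j ≥ 0} := by
  obtain ⟨σ, _, M, rfl⟩ := hL
  set F := rho r m '' {w | w ∈ M.accepts ∧ w.length < Fintype.card σ}
  set X := convexHull ℝ F + (PointedCone.hull ℝ (pumpingDirs M (Fintype.card σ)) : Set _)
  have hX : IsPolyhedral X := ((List.finite_length_lt _ _).subset fun _ hw => hw.2).image _
    |>.isPolyhedral_convexHull.add (finite_pumpingDirs M _).isPolyhedral_hull
  have hFL : F ⊆ rhoSet r m M.accepts := by
    rintro _ ⟨w, hw, rfl⟩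
    exact ⟨w, hw.1, rfl⟩
  suffices h : closure (convexHull ℝ (rhoSet r m M.accepts)) = X by
    rw [h]
    exact hX.exists_fin_halfspaces
  refine (closure_minimal (convexHull_min ?_ hX.convex) hX.isClosed).antisymm ?_
  · rintro _ ⟨w, hw, rfl⟩
    exact rho_mem_convexHull_add_hull M hr hw
  · rintro _ ⟨u, hu, v, hv, rfl⟩
    exact add_mem_of_mem_recessionCone (subset_closure (convexHull_mono hFL hu))
      (Submodule.span_le.2 (pumpingDirs_subset_recessionCone M hr _) hv)

/-- the closure of the convex hull of a regular set of integer vectors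
is a finite intersection of closed half-spaces. -/
theorem closure_convexHull_regular_eq_iInter_halfspaces
    (r m : ℕ) (hr : 2 ≤ r) (hm : 1 ≤ m)
    (L : Set (Word r m)) (hL : Language.IsRegular L) :
    ∃ (k : ℕ) (α : Fin k → (Fin m → ℝ)) (c : Fin k → ℝ),
      closure (convexHull ℝ (rhoSet r m L)) =
        ⋂ j : Fin k, {x : Fin m → ℝ | (∑ i, α j i * x i) + c j ≥ 0} :=
  closure_convexHull_regular_eq_iInter_halfspaces_general r m hr L hL
end

section
/- For any language L ⊆ Σ_{r^m}*, the convex hull of ξ(L*) equals the convex hull of ξ(L), i.e., conv({ξ(σ) : σ ∈ L*, σ ≠ ε}) = conv({ξ(σ) : σ ∈ L, σ ≠ ε}), where L* is the Kleene star of L. -/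
lemma rho_append_s3 (r m : ℕ) (a b : Word r m) :
    rho r m (a ++ b) = rho r m a + (r : ℝ) ^ a.length • rho r m b := by
  induction a with
  | nil => simp [rho]
  | cons x a ih =>
    simp only [List.cons_append, rho, ih, List.length_cons, pow_succ, smul_add, smul_smul]
    module

/-- With `s = r^|a|` and `t = r^|b|`, the weights are proportional to `s - 1` and `s (t - 1)`. -/
lemma xi_append_mem_segment {r m : ℕ} (hr : 1 < r) {a b : Word r m} (ha : a ≠ []) (hb : b ≠ []) :
    xi r m (a ++ b) ∈ segment ℝ (xi r m a) (xi r m b) := by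
  have one_lt_pow {n : ℕ} (hn : n ≠ 0) : (1 : ℝ) < (r : ℝ) ^ n :=
    one_lt_pow₀ (by exact_mod_cast hr) hn
  have hs : 1 < (r : ℝ) ^ a.length := one_lt_pow (by simpa using ha)
  have ht : 1 < (r : ℝ) ^ b.length := one_lt_pow (by simpa using hb)
  simp only [xi, rho_append_s3, List.length_append, pow_add, mem_segment_iff_div]
  generalize (r : ℝ) ^ a.length = s at *
  generalize (r : ℝ) ^ b.length = t at *
  have hst : 1 < s * t := by nlinarith
  refine ⟨s - 1, s * (t - 1), by linarith, by nlinarith, by nlinarith, ?_⟩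
  have hsum : s - 1 + s * (t - 1) = -(1 - s * t) := by ring
  have : 1 - s ≠ 0 := by linarith
  have : 1 - t ≠ 0 := by linarith
  have : 1 - s * t ≠ 0 := by linarith
  rw [hsum, smul_add, smul_smul, smul_smul, smul_smul]
  congr 2 <;> field_simp <;> ring

lemma xi_append_mem {r m : ℕ} (hr : 1 < r) {C : Set (Fin m → ℝ)} (hC : Convex ℝ C)
    {a b : Word r m} (ha : a = [] ∨ xi r m a ∈ C) (hb : b = [] ∨ xi r m b ∈ C) :
    a ++ b = [] ∨ xi r m (a ++ b) ∈ C := by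
  rcases eq_or_ne a [] with rfl | ha'
  · simpa using hb
  rcases eq_or_ne b [] with rfl | hb'
  · simpa using ha
  exact Or.inr (hC.segment_subset (ha.resolve_left ha') (hb.resolve_left hb')
    (xi_append_mem_segment hr ha' hb'))

lemma xi_flatten_mem_convexHull {r m : ℕ} (hr : 1 < r) {L : Set (Word r m)}
    {ws : List (Word r m)} (hws : ∀ u ∈ ws, u ∈ L) :
    ws.flatten = [] ∨ xi r m ws.flatten ∈ convexHull ℝ (xiSet r m L) := by
  induction ws with
  | nil => exact Or.inl rfl
  | cons u ws ih =>
    have hu : u = [] ∨ xi r m u ∈ convexHull ℝ (xiSet r m L) :=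
      or_iff_not_imp_left.2 fun hne =>
        subset_convexHull ℝ _ ⟨u, hws u List.mem_cons_self, hne, rfl⟩
    exact xi_append_mem hr (convex_convexHull ℝ _) hu
      (ih fun v hv => hws v (List.mem_cons_of_mem u hv))

lemma subset_kstar' {α : Type*} (L : Set (List α)) : L ⊆ kstar' L :=
  fun u hu => ⟨[u], by simpa using hu, by simp⟩

lemma xiSet_mono {r m : ℕ} {L L' : Set (Word r m)} (h : L ⊆ L') : xiSet r m L ⊆ xiSet r m L' :=
  fun _ ⟨σ, hσ, hne, hx⟩ => ⟨σ, h hσ, hne, hx⟩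

theorem convexHull_xiSet_kstar_general (r m : ℕ) (hr : 2 ≤ r)
    (L : Set (Word r m)) :
    convexHull ℝ (xiSet r m (kstar' L)) = convexHull ℝ (xiSet r m L) := by
  refine (convexHull_min ?_ (convex_convexHull ℝ _)).antisymm
    (convexHull_mono (xiSet_mono (subset_kstar' L)))
  rintro _ ⟨_, ⟨ws, hws, rfl⟩, hne, rfl⟩
  exact (xi_flatten_mem_convexHull hr hws).resolve_left hne

/-- Lemma 2 of the paper: `conv(ξ(L*)) = conv(ξ(L))`. -/
theorem convexHull_xiSet_kstar (r m : ℕ) (hr : 2 ≤ r) (hm : 1 ≤ m)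
    (L : Set (Word r m)) :
    convexHull ℝ (xiSet r m (kstar' L)) = convexHull ℝ (xiSet r m L) :=
  convexHull_xiSet_kstar_general r m hr L
end

section
/- Every regular language L over a finite alphabet Σ can be decomposed into a finite union of regular languages of the form σ_{n+1}·L_n*·σ_n⋯L_1*·σ_1: there exist k ∈ ℕ and, for each j ∈ {1,…,k}, an integer n_j ≥ 0, words σ^j_1,…,σ^j_{n_j+1} ∈ Σ* and regular languages L^j_1,…,L^j_{n_j} ⊆ Σ*, such that L = ⋃_{j=1}^k σ^j_{n_j+1}·(L^j_{n_j})*·σ^j_{n_j}⋯(L^j_1)*·σ^j_1, where each summand is the concatenation, read left to right, of the singleton language {σ^j_{n_j+1}}, the Kleene star of L^j_{n_j}, {σ^j_{n_j}}, …, the Kleene star of L^j_1, and {σ^j_1}. -/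
/-!
Let `P_S(p, F)` be the set of words leading a DFA from `p` into `F` with every intermediate
state in `S`. Then `P_∅(p, F)` is finite (its words have length at most one), and splitting a
word at its first and at its last intermediate visit to `s` gives the McNaughton–Yamada recursion
`P_{S ∪ {s}}(p, F) = P_S(p, F) ∪ P_S(p, {s}) · P_{S ∪ {s}}(s, {s})* · P_S(s, F)`.
The starred loop language is regular: its start state lies in `S ∪ {s}`, so it is recognised by
the automaton with every transition out of `S ∪ {s}` sent to a dead state. Singletons are chains,
and chains are closed under concatenation and contain `K*` for regular `K`; by induction on `S`,
every `P_S(p, F)`, in particular the language of the automaton, is a finite union of chains.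
-/

universe u

open Function

section Chains

variable {α : Type u}

theorem catL_assoc (A B C : Set (List α)) : catL (catL A B) C = catL A (catL B C) := by
  ext w
  constructor
  · rintro ⟨_, ⟨a, ha, b, hb, rfl⟩, c, hc, rfl⟩
    exact ⟨a, ha, b ++ c, ⟨b, hb, c, hc, rfl⟩, List.append_assoc a b c⟩
  · rintro ⟨a, ha, _, ⟨b, hb, c, hc, rfl⟩, rfl⟩
    exact ⟨a ++ b, ⟨a, ha, b, hb, rfl⟩, c, hc, (List.append_assoc a b c).symm⟩

theorem catL_singleton_singleton (u v : List α) : catL {u} {v} = {u ++ v} := by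
  ext w
  simp [catL]

theorem catL_nil_left (A : Set (List α)) : catL {[]} A = A := by
  ext w
  simp [catL]

theorem catL_nil_right (A : Set (List α)) : catL A {[]} = A := by
  ext w
  simp [catL]

theorem catL_iUnion_iUnion {ι κ : Sort*} (A : ι → Set (List α)) (B : κ → Set (List α)) :
    catL (⋃ i, A i) (⋃ j, B j) = ⋃ i, ⋃ j, catL (A i) (B j) := by
  ext w
  simp only [catL, Set.mem_iUnion, Set.mem_ofPred_eq]
  grind

theorem chainLang_congr {σ σ' : ℕ → List α} {Ls Ls' : ℕ → Set (List α)} (n : ℕ)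
    (hσ : ∀ i ≤ n + 1, σ i = σ' i) (hLs : ∀ i ≤ n, Ls i = Ls' i) :
    chainLang σ Ls n = chainLang σ' Ls' n := by
  induction n with
  | zero => simp [chainLang, hσ 1 le_rfl]
  | succ n ih =>
    rw [chainLang, chainLang, hσ (n + 2) le_rfl, hLs (n + 1) le_rfl,
      ih (fun i hi => hσ i (by omega)) (fun i hi => hLs i (by omega))]

def IsChainLang (L : Set (List α)) : Prop :=
  ∃ n σ Ls, (∀ i ∈ Finset.Icc 1 n, Language.IsRegular (Ls i)) ∧ L = chainLang σ Ls n

theorem isChainLang_singleton (w : List α) : IsChainLang {w} :=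
  ⟨0, fun _ => w, fun _ => ∅, by simp, rfl⟩

theorem IsChainLang.singleton_catL {L : Set (List α)} (w : List α) (hL : IsChainLang L) :
    IsChainLang (catL {w} L) := by
  obtain ⟨n, σ, Ls, hreg, rfl⟩ := hL
  refine ⟨n, update σ (n + 1) (w ++ σ (n + 1)), Ls, hreg, ?_⟩
  cases n with
  | zero => simp [chainLang, catL_singleton_singleton]
  | succ n =>
    have htail : chainLang (update σ (n + 1 + 1) (w ++ σ (n + 1 + 1))) Ls n = chainLang σ Ls n :=
      chainLang_congr n (fun i hi => update_of_ne (by omega) _ σ) fun _ _ => rfl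
    rw [chainLang, chainLang, ← catL_assoc, catL_singleton_singleton, update_self, htail]

theorem IsChainLang.kstar'_catL {K L : Set (List α)} (hK : Language.IsRegular K)
    (hL : IsChainLang L) : IsChainLang (catL (kstar' K) L) := by
  obtain ⟨n, σ, Ls, hreg, rfl⟩ := hL
  refine ⟨n + 1, update σ (n + 2) [], update Ls (n + 1) K, fun i hi => ?_, ?_⟩
  · rcases eq_or_ne i (n + 1) with rfl | hi'
    · rwa [update_self]
    · rw [update_of_ne hi']
      exact hreg i (by simp only [Finset.mem_Icc] at hi ⊢; omega)
  · rw [chainLang, update_self, update_self, catL_nil_left,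
      chainLang_congr n (fun i hi => update_of_ne (by omega) _ σ)
        fun i hi => update_of_ne (by omega) _ Ls]

theorem IsChainLang.catL {L M : Set (List α)} (hL : IsChainLang L) (hM : IsChainLang M) :
    IsChainLang (catL L M) := by
  obtain ⟨n, σ, Ls, hreg, rfl⟩ := hL
  induction n with
  | zero => exact hM.singleton_catL (σ 1)
  | succ n ih =>
    rw [chainLang, catL_assoc, catL_assoc]
    refine (IsChainLang.kstar'_catL (hreg (n + 1) (by simp)) ?_).singleton_catL _
    exact ih fun i hi => hreg i (by simp only [Finset.mem_Icc] at hi ⊢; omega)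

theorem isChainLang_kstar' {K : Set (List α)} (hK : Language.IsRegular K) :
    IsChainLang (kstar' K) := by
  simpa only [catL_nil_right] using (isChainLang_singleton []).kstar'_catL hK

def IsChainUnion (L : Set (List α)) : Prop :=
  ∃ (ι : Type u) (_ : Finite ι) (C : ι → Set (List α)), (∀ i, IsChainLang (C i)) ∧ L = ⋃ i, C i

theorem IsChainLang.isChainUnion {L : Set (List α)} (hL : IsChainLang L) : IsChainUnion L :=
  ⟨PUnit, inferInstance, fun _ => L, fun _ => hL, (Set.iUnion_const L).symm⟩

theorem isChainUnion_of_finite {X : Set (List α)} (hX : X.Finite) : IsChainUnion X :=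
  ⟨X, hX.to_subtype, fun w => {w.1}, fun w => isChainLang_singleton w.1, by simp⟩

theorem IsChainUnion.union {L M : Set (List α)} (hL : IsChainUnion L) (hM : IsChainUnion M) :
    IsChainUnion (L ∪ M) := by
  obtain ⟨ι, _, C, hC, rfl⟩ := hL
  obtain ⟨κ, _, D, hD, rfl⟩ := hM
  exact ⟨ι ⊕ κ, inferInstance, Sum.elim C D, Sum.forall.2 ⟨hC, hD⟩, by rw [Set.iUnion_sum]; rfl⟩

theorem IsChainUnion.catL {L M : Set (List α)} (hL : IsChainUnion L) (hM : IsChainUnion M) :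
    IsChainUnion (catL L M) := by
  obtain ⟨ι, _, C, hC, rfl⟩ := hL
  obtain ⟨κ, _, D, hD, rfl⟩ := hM
  refine ⟨ι × κ, inferInstance, fun p => _root_.catL (C p.1) (D p.2),
    fun p => (hC p.1).catL (hD p.2), ?_⟩
  rw [catL_iUnion_iUnion, Set.iUnion_prod']

end Chains

namespace DFA

variable {α : Type u} {Q : Type*} (M : DFA α Q)

def pathThrough (S : Set Q) (p : Q) (F : Set Q) : Set (List α) :=
  {w | M.evalFrom p w ∈ F ∧ ∀ i, 0 < i → i < w.length → M.evalFrom p (w.take i) ∈ S}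

variable {M}

theorem pathThrough_mono {S S' : Set Q} (h : S ⊆ S') (p : Q) (F : Set Q) :
    M.pathThrough S p F ⊆ M.pathThrough S' p F :=
  fun _ hw => ⟨hw.1, fun i hi hiw => h (hw.2 i hi hiw)⟩

theorem nil_mem_pathThrough (S : Set Q) (p : Q) : [] ∈ M.pathThrough S p {p} :=
  ⟨rfl, fun _ _ hi => (Nat.not_lt_zero _ hi).elim⟩

theorem catL_pathThrough_subset {T : Set Q} {p r : Q} {F : Set Q} (hr : r ∈ T) :
    catL (M.pathThrough T p {r}) (M.pathThrough T r F) ⊆ M.pathThrough T p F := by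
  rintro _ ⟨u, ⟨hu, hu'⟩, v, ⟨hv, hv'⟩, rfl⟩
  rw [Set.mem_singleton_iff] at hu
  refine ⟨by rwa [evalFrom_of_append, hu], fun i hi hiw => ?_⟩
  rw [List.take_append, evalFrom_of_append]
  rcases lt_or_ge i u.length with hiu | hui
  · rw [Nat.sub_eq_zero_of_le hiu.le, List.take_zero, evalFrom_nil]
    exact hu' i hi hiu
  · rw [List.take_of_length_le hui, hu]
    rcases hui.eq_or_lt with rfl | hui
    · rwa [Nat.sub_self, List.take_zero, evalFrom_nil]
    · exact hv' _ (by omega) (by rw [List.length_append] at hiw; omega)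

theorem kstar'_pathThrough_subset {T : Set Q} {r : Q} (hr : r ∈ T) :
    kstar' (M.pathThrough T r {r}) ⊆ M.pathThrough T r {r} := by
  rintro _ ⟨ws, hws, rfl⟩
  induction ws with
  | nil => exact nil_mem_pathThrough T r
  | cons x ws ih =>
    exact catL_pathThrough_subset hr
      ⟨x, hws x List.mem_cons_self, _, ih fun y hy => hws y (List.mem_cons_of_mem x hy), rfl⟩

theorem take_mem_pathThrough {S : Set Q} {p : Q} {w : List α} {i : ℕ}
    (h : ∀ k, 0 < k → k < i → M.evalFrom p (w.take k) ∈ S) :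
    w.take i ∈ M.pathThrough S p {M.evalFrom p (w.take i)} := by
  refine ⟨rfl, fun k hk hki => ?_⟩
  have hki : k < i := hki.trans_le (List.length_take_le i w)
  rw [List.take_take, min_eq_left hki.le]
  exact h k hk hki

theorem drop_mem_pathThrough {S : Set Q} {p : Q} {F : Set Q} {w : List α} {i : ℕ}
    (hw : M.evalFrom p w ∈ F) (h : ∀ k, i < k → k < w.length → M.evalFrom p (w.take k) ∈ S) :
    w.drop i ∈ M.pathThrough S (M.evalFrom p (w.take i)) F := by
  refine ⟨by rwa [← evalFrom_of_append, List.take_append_drop], fun k hk hkw => ?_⟩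
  rw [← evalFrom_of_append, ← List.take_add]
  exact h (i + k) (by omega) (by rw [List.length_drop] at hkw; omega)

theorem pathThrough_insert_subset {S : Set Q} {s p : Q} {F : Set Q} :
    M.pathThrough (insert s S) p F ⊆
      M.pathThrough S p F ∪ catL (M.pathThrough S p {s}) (M.pathThrough (insert s S) s F) := by
  classical
  intro w hw
  by_cases hS : w ∈ M.pathThrough S p F
  · exact Or.inl hS
  have hvisit : ∃ i, 0 < i ∧ i < w.length ∧ M.evalFrom p (w.take i) ∉ S := by
    by_contra! h
    exact hS ⟨hw.1, h⟩
  obtain ⟨hi0, hiw, hiS⟩ := Nat.find_spec hvisit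
  have hs : M.evalFrom p (w.take (Nat.find hvisit)) = s :=
    (Set.mem_insert_iff.1 (hw.2 _ hi0 hiw)).resolve_right hiS
  have hu := take_mem_pathThrough (S := S) (p := p) (w := w) (i := Nat.find hvisit)
    fun k hk hki => not_not.1 fun hkS => Nat.find_min hvisit hki ⟨hk, by omega, hkS⟩
  have hv := drop_mem_pathThrough (S := insert s S) (i := Nat.find hvisit) hw.1
    fun k hik hkw => hw.2 k (by omega) hkw
  rw [hs] at hu hv
  exact Or.inr ⟨_, hu, _, hv, (List.take_append_drop ..).symm⟩

theorem pathThrough_insert_self_subset {S : Set Q} {s : Q} {F : Set Q} :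
    M.pathThrough (insert s S) s F ⊆
      catL (M.pathThrough (insert s S) s {s}) (M.pathThrough S s F) := by
  classical
  intro w hw
  set j := Nat.findGreatest (fun k => M.evalFrom s (w.take k) = s) w.length
  have hs : M.evalFrom s (w.take j) = s :=
    Nat.findGreatest_spec (P := fun k => M.evalFrom s (w.take k) = s) (Nat.zero_le _) rfl
  have hjw : j ≤ w.length := Nat.findGreatest_le _
  have hu := take_mem_pathThrough (S := insert s S) (p := s) (w := w) (i := j)
    fun k hk hkj => hw.2 k hk (by omega)
  have hv := drop_mem_pathThrough (S := S) (i := j) hw.1 fun k hjk hkw =>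
    (Set.mem_insert_iff.1 (hw.2 k (by omega) hkw)).resolve_left
      (Nat.findGreatest_is_greatest hjk hkw.le)
  rw [hs] at hu hv
  exact ⟨_, hu, _, hv, (List.take_append_drop ..).symm⟩

theorem pathThrough_insert (S : Set Q) (s p : Q) (F : Set Q) :
    M.pathThrough (insert s S) p F = M.pathThrough S p F ∪
      catL (M.pathThrough S p {s})
        (catL (kstar' (M.pathThrough (insert s S) s {s})) (M.pathThrough S s F)) := by
  have hs := Set.mem_insert s S
  have hS := Set.subset_insert s S
  apply subset_antisymm
  · intro w hw
    rcases pathThrough_insert_subset hw with hw | ⟨u, hu, v, hv, rfl⟩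
    · exact Or.inl hw
    obtain ⟨x, hx, y, hy, rfl⟩ := pathThrough_insert_self_subset hv
    exact Or.inr ⟨u, hu, x ++ y, ⟨x, ⟨[x], by simpa, by simp⟩, y, hy, rfl⟩, rfl⟩
  · rintro w (hw | ⟨u, hu, _, ⟨x, hx, y, hy, rfl⟩, rfl⟩)
    · exact pathThrough_mono hS p F hw
    exact catL_pathThrough_subset hs ⟨u, pathThrough_mono hS _ _ hu, x ++ y,
      catL_pathThrough_subset hs ⟨x, kstar'_pathThrough_subset hs hx, y,
        pathThrough_mono hS _ _ hy, rfl⟩, rfl⟩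

theorem pathThrough_empty_finite [Finite α] (p : Q) (F : Set Q) :
    (M.pathThrough ∅ p F).Finite :=
  (List.finite_length_le α 1).subset fun _ hw => not_lt.1 fun h => hw.2 1 one_pos h

variable (M) in
open Classical in
noncomputable def confine (T : Set Q) (p : Q) (F : Set Q) : DFA α (Option Q) where
  step x a := x.bind fun q => if q ∈ T then some (M.step q a) else none
  start := some p
  accept := some '' F

theorem confine_evalFrom_none (T : Set Q) (p : Q) (F : Set Q) (w : List α) :
    (M.confine T p F).evalFrom none w = none := by
  induction w with
  | nil => rfl
  | cons a w ih => exact ih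

open Classical in
theorem confine_evalFrom_some (T : Set Q) (p : Q) (F : Set Q) (q : Q) (w : List α) :
    (M.confine T p F).evalFrom (some q) w =
      if ∀ i < w.length, M.evalFrom q (w.take i) ∈ T then some (M.evalFrom q w) else none := by
  induction w generalizing q with
  | nil => simp
  | cons a w ih =>
    simp only [evalFrom_cons, List.length_cons, Nat.forall_lt_succ_left, List.take_zero,
      evalFrom_nil, List.take_succ_cons]
    have hstep : (M.confine T p F).step (some q) a = if q ∈ T then some (M.step q a) else none :=
      rfl
    by_cases hq : q ∈ T
    · simp [hstep, hq, ih]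
    · simp [hstep, hq, confine_evalFrom_none]

theorem isRegular_pathThrough [Fintype Q] {T : Set Q} {p : Q} (hp : p ∈ T) (F : Set Q) :
    Language.IsRegular (M.pathThrough T p F) := by
  refine Language.isRegular_iff.2 ⟨Option Q, inferInstance, M.confine T p F, ?_⟩
  have hstart (w : List α) : (∀ i < w.length, M.evalFrom p (w.take i) ∈ T) ↔
      ∀ i, 0 < i → i < w.length → M.evalFrom p (w.take i) ∈ T := by
    refine ⟨fun h i _ hi => h i hi, fun h i hi => ?_⟩
    rcases i.eq_zero_or_pos with rfl | hpos
    · simpa using hp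
    · exact h i hpos hi
  refine Set.ext fun w => ?_
  change (M.confine T p F).evalFrom (some p) w ∈ some '' F ↔ w ∈ M.pathThrough T p F
  rw [confine_evalFrom_some, pathThrough, Set.mem_ofPred_eq, ← hstart]
  split_ifs with h
  · simpa using fun _ => h
  · simp [h]

theorem isChainUnion_pathThrough [Finite α] [Fintype Q] (S : Finset Q) (p : Q) (F : Set Q) :
    IsChainUnion (M.pathThrough S p F) := by
  classical
  induction S using Finset.induction_on generalizing p F with
  | empty => simpa using isChainUnion_of_finite (pathThrough_empty_finite (M := M) p F)
  | insert s S _ ih =>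
    rw [Finset.coe_insert, pathThrough_insert]
    exact (ih p F).union ((ih p {s}).catL
      ((isChainLang_kstar' (isRegular_pathThrough (Set.mem_insert s _) _)).isChainUnion.catL
        (ih s F)))

theorem pathThrough_univ : M.pathThrough Set.univ M.start M.accept = M.accepts :=
  Set.ext fun _ => ⟨fun h => h.1, fun h => ⟨h, fun _ _ _ => trivial⟩⟩

theorem isChainUnion_accepts [Finite α] [Fintype Q] : IsChainUnion M.accepts := by
  rw [← pathThrough_univ, ← Finset.coe_univ]
  exact isChainUnion_pathThrough _ _ _

end DFA

/-- every regular language is a finite union of languages of the form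
`σ_{n+1}·(L_n)*·σ_n ⋯ (L_1)*·σ_1` with each `L_i` regular. -/
theorem regular_eq_finite_union_chainLang
    {α : Type} [Fintype α] (L : Set (List α)) (hL : Language.IsRegular L) :
    ∃ (k : ℕ) (n : Fin k → ℕ) (σ : Fin k → ℕ → List α)
      (Ls : Fin k → ℕ → Set (List α)),
      (∀ j : Fin k, ∀ i ∈ Finset.Icc 1 (n j), Language.IsRegular (Ls j i)) ∧
      L = ⋃ j : Fin k, chainLang (σ j) (Ls j) (n j) := by
  obtain ⟨Q, _, M, rfl⟩ := hL
  obtain ⟨ι, _, C, hC, hM⟩ := M.isChainUnion_accepts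
  obtain ⟨k, ⟨e⟩⟩ := Finite.exists_equiv_fin ι
  choose n σ Ls hreg hCeq using hC
  refine ⟨k, n ∘ e.symm, σ ∘ e.symm, Ls ∘ e.symm, fun j => hreg (e.symm j), ?_⟩
  rw [hM, ← e.symm.surjective.iUnion_comp]
  exact Set.iUnion_congr fun j => hCeq (e.symm j)
end

section
/- Let R ⊆ ℝ^m × ℝ₊ be a finite set of rays such that P(R) is nonempty. Then cl(ℝ₋·P(R)) is the polyhedral convex set represented by the finite set of rays R' = {(0,1)} ∪ {(−α, 0) : (α,c) ∈ R}, i.e., cl(ℝ₋·P(R)) = P(R'), where 0 denotes the zero vector of ℝ^m. -/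
section ConeClosed
variable {E : Type*} [NormedAddCommGroup E] [NormedSpace ℝ E] [FiniteDimensional ℝ E]
  [DecidableEq E]

def coneGen (S : Finset E) : Set E :=
  {y | ∃ t : E → ℝ, (∀ p, 0 ≤ t p) ∧ y = ∑ p ∈ S, t p • p}

lemma coneGen_mono {S T : Finset E} (h : S ⊆ T) : coneGen S ⊆ coneGen T := by
  rintro y ⟨t, ht, rfl⟩
  refine ⟨fun p => if p ∈ S then t p else 0, fun p => ?_, ?_⟩
  · dsimp only; split
    · exact ht _
    · exact le_refl 0
  · symm
    rw [← Finset.sum_subset h (fun x _ hx => by simp [hx])]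
    exact Finset.sum_congr rfl fun p hp => by simp [hp]

lemma sum_subtype_eq (S : Finset E) (c : {x : E // x ∈ S} → ℝ) :
    ∑ i : {x : E // x ∈ S}, c i • (i : E)
      = ∑ p ∈ S, (if h : p ∈ S then c ⟨p, h⟩ else 0) • p := by
  rw [Finset.univ_eq_attach,
    ← Finset.sum_attach S (fun p => (if h : p ∈ S then c ⟨p, h⟩ else 0) • p)]
  exact Finset.sum_congr rfl fun i _ => by simp [i.2]

lemma coneGen_caratheodory (S : Finset E) :
    ∀ y ∈ coneGen S, ∃ S' : Finset E, S' ⊆ S ∧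
      LinearIndependent ℝ (fun i : {x : E // x ∈ S'} => (i : E)) ∧ y ∈ coneGen S' := by
  induction S using Finset.strongInduction with
  | _ S ih =>
  intro y hy
  by_cases hli : LinearIndependent ℝ (fun i : {x : E // x ∈ S} => (i : E))
  · exact ⟨S, Finset.Subset.refl S, hli, hy⟩
  obtain ⟨t, ht, rfl⟩ := hy
  obtain ⟨g, hg0, i₁, hi₁⟩ : ∃ g : {x : E // x ∈ S} → ℝ,
      (∑ i, g i • (i : E)) = 0 ∧ ∃ i, 0 < g i := by
    obtain ⟨g, hsum, i, hi⟩ := Fintype.not_linearIndependent_iff.mp hli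
    rcases hi.lt_or_gt with h | h
    · exact ⟨-g, by simpa using congrArg Neg.neg hsum, i, by simpa using h⟩
    · exact ⟨g, hsum, i, h⟩
  classical
  set P : Finset {x : E // x ∈ S} := Finset.univ.filter (fun i => 0 < g i) with hP
  have hi₁P : i₁ ∈ P := by simp [hP, hi₁]
  obtain ⟨i₀, hi₀P, hmin⟩ := Finset.exists_min_image P (fun i => t i / g i) ⟨i₁, hi₁P⟩
  have hgi₀ : 0 < g i₀ := (Finset.mem_filter.mp hi₀P).2
  set lam : ℝ := t i₀ / g i₀ with hlam
  have hlam0 : 0 ≤ lam := div_nonneg (ht _) hgi₀.le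
  set G : E → ℝ := fun p => if h : p ∈ S then g ⟨p, h⟩ else 0 with hG
  set t' : E → ℝ := fun p => t p - lam * G p with ht'
  have ht'0 : ∀ p, 0 ≤ t' p := by
    intro p
    by_cases hp : p ∈ S
    · rcases le_or_gt (g ⟨p, hp⟩) 0 with h | h
      · have hmul : lam * G p ≤ 0 :=
          mul_nonpos_of_nonneg_of_nonpos hlam0 (by simp [hG, hp, h])
        simp only [ht']; linarith [ht p]
      · have hmem : (⟨p, hp⟩ : {x : E // x ∈ S}) ∈ P := by simp [hP, h]
        have h2 := hmin _ hmem
        have h3 : lam * g ⟨p, hp⟩ ≤ t p := by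
          rw [hlam]
          calc t ↑i₀ / g i₀ * g ⟨p, hp⟩ ≤ t p / g ⟨p, hp⟩ * g ⟨p, hp⟩ :=
                mul_le_mul_of_nonneg_right h2 h.le
            _ = t p := div_mul_cancel₀ _ h.ne'
        simp only [ht', hG, hp, dif_pos]
        linarith
    · simp only [ht', hG, hp, dif_neg, not_false_iff, mul_zero, sub_zero]
      exact ht p
  have hsumG : ∑ p ∈ S, G p • p = 0 := by
    rw [← hg0, Finset.univ_eq_attach, ← Finset.sum_attach S (fun p => G p • p)]
    exact Finset.sum_congr rfl fun i _ => by simp [hG, i.2]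
  have hsum' : ∑ p ∈ S, t' p • p = ∑ p ∈ S, t p • p := by
    simp only [ht', sub_smul, Finset.sum_sub_distrib, mul_smul, ← Finset.smul_sum, hsumG,
      smul_zero, sub_zero]
  have ht'i₀ : t' (↑i₀) = 0 := by
    simp only [ht', hG, i₀.2, dif_pos, hlam]
    have he : (⟨(i₀ : E), i₀.2⟩ : {x : E // x ∈ S}) = i₀ := rfl
    rw [he, div_mul_cancel₀ _ hgi₀.ne', sub_self]
  have hmem : (∑ p ∈ S, t p • p) ∈ coneGen (S.erase ↑i₀) := by
    refine ⟨t', ht'0, ?_⟩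
    rw [← hsum', ← Finset.sum_erase_add S _ i₀.2, ht'i₀, zero_smul, add_zero]
  obtain ⟨S', hS'sub, hS'li, hS'mem⟩ :=
    ih (S.erase ↑i₀) (Finset.erase_ssubset i₀.2) _ hmem
  exact ⟨S', hS'sub.trans (Finset.erase_subset _ _), hS'li, hS'mem⟩

lemma coneGen_isClosed_of_li {S : Finset E}
    (h : LinearIndependent ℝ (fun i : {x : E // x ∈ S} => (i : E))) :
    IsClosed (coneGen S) := by
  set L : ({x : E // x ∈ S} → ℝ) →ₗ[ℝ] E :=
    { toFun := fun c => ∑ i, c i • (i : E)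
      map_add' := fun c d => by simp [add_smul, Finset.sum_add_distrib]
      map_smul' := fun r c => by simp [mul_smul, Finset.smul_sum] } with hL
  have hker : LinearMap.ker L = ⊥ := by
    rw [LinearMap.ker_eq_bot']
    intro c hc
    have hz := Fintype.linearIndependent_iff.mp h c hc
    funext i; exact hz i
  have hemb := LinearMap.isClosedEmbedding_of_injective hker
  have hK : IsClosed {c : {x : E // x ∈ S} → ℝ | ∀ i, 0 ≤ c i} := by
    have hset : {c : {x : E // x ∈ S} → ℝ | ∀ i, 0 ≤ c i}
        = ⋂ i, (fun c : {x : E // x ∈ S} → ℝ => c i) ⁻¹' Set.Ici 0 := by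
      ext c; simp [Set.mem_iInter]
    rw [hset]
    exact isClosed_iInter fun i => (isClosed_Ici).preimage (continuous_apply i)
  have himg : coneGen S = L '' {c | ∀ i, 0 ≤ c i} := by
    ext y
    constructor
    · rintro ⟨t, ht, rfl⟩
      refine ⟨fun i => t i, fun i => ht _, ?_⟩
      show ∑ i : {x : E // x ∈ S}, t (i : E) • (i : E) = _
      rw [sum_subtype_eq S (fun i => t (i : E))]
      exact Finset.sum_congr rfl fun p hp => by simp [hp]
    · rintro ⟨c, hc, rfl⟩
      refine ⟨fun p => if h : p ∈ S then c ⟨p, h⟩ else 0, fun p => ?_, ?_⟩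
      · dsimp only; split
        · exact hc _
        · exact le_refl 0
      · show (∑ i : {x : E // x ∈ S}, c i • (i : E)) = _
        exact sum_subtype_eq S c
  rw [himg]
  exact hemb.isClosedMap _ hK

lemma isClosed_coneGen (S : Finset E) : IsClosed (coneGen S) := by
  classical
  have hun : coneGen S = ⋃ S' ∈ S.powerset.filter
      (fun S' => LinearIndependent ℝ (fun i : {x : E // x ∈ S'} => (i : E))), coneGen S' := by
    ext y
    simp only [Set.mem_iUnion, exists_prop, Finset.mem_filter, Finset.mem_powerset]
    constructor
    · intro hy
      obtain ⟨S', h1, h2, h3⟩ := coneGen_caratheodory S y hy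
      exact ⟨S', ⟨h1, h2⟩, h3⟩
    · rintro ⟨S', ⟨h1, _⟩, h3⟩
      exact coneGen_mono h1 h3
  rw [hun]
  exact isClosed_biUnion_finset fun S' hS' =>
    coneGen_isClosed_of_li (Finset.mem_filter.mp hS').2

end ConeClosed

section Main

variable {m : ℕ}

abbrev EE (m : ℕ) := (Fin m → ℝ) × ℝ

lemma isClosed_coneOf (R : Finset (EE m)) : IsClosed (coneOf R) := by
  classical
  have h : coneOf R = coneGen R := rfl
  rw [h]; exact isClosed_coneGen R

lemma isClosed_polyOf (R : Finset (EE m)) : IsClosed (polyOf R) := by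
  have h : polyOf R = (fun x : Fin m → ℝ => (x, (1:ℝ))) ⁻¹' coneOf R := rfl
  rw [h]
  exact (isClosed_coneOf R).preimage (continuous_id.prodMk continuous_const)

lemma mem_polyOf_negRays (R : Finset (EE m)) (y : Fin m → ℝ) :
    y ∈ polyOf (@insert _ _ (@Finset.instInsert _ (Classical.decEq _))
        ((0 : Fin m → ℝ), (1 : ℝ))
        (@Finset.image _ _ (Classical.decEq _) (fun p => (-p.1, (0 : ℝ))) R)) ↔
    ∃ u : EE m → ℝ, (∀ p, 0 ≤ u p) ∧ y = -∑ p ∈ R, u p • p.1 := by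
  classical
  set f : EE m → EE m := fun p => (-p.1, (0 : ℝ)) with hf
  have e1 : @Finset.image _ _ (Classical.decEq _) (fun p : EE m => (-p.1, (0 : ℝ))) R
      = Finset.image f R := by
    congr 1
    exact Subsingleton.elim _ _
  have e2 : ∀ s : Finset (EE m),
      (@insert _ _ (@Finset.instInsert _ (Classical.decEq _))
        ((0 : Fin m → ℝ), (1 : ℝ)) s)
      = insert ((0 : Fin m → ℝ), (1 : ℝ)) s := by
    intro s
    ext x
    simp
  rw [e1, e2]
  set img := Finset.image f R with himgdef
  have h01 : ((0 : Fin m → ℝ), (1 : ℝ)) ∉ img := by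
    intro h
    obtain ⟨p, _, hp⟩ := Finset.mem_image.mp h
    have := congrArg Prod.snd hp
    simp [hf] at this
  constructor
  · rintro ⟨t, ht, heq⟩
    rw [Finset.sum_insert h01] at heq
    have hyfst : y = ∑ q ∈ img, t q • q.1 := by
      have := congrArg Prod.fst heq
      simpa [Prod.fst_sum] using this
    have hsec : ∀ q ∈ img, ∃ p, p ∈ R ∧ f p = q := by
      intro q hq
      obtain ⟨p, hpR, hpq⟩ := Finset.mem_image.mp hq
      exact ⟨p, hpR, hpq⟩
    choose! sec hsecR hsecf using hsec
    refine ⟨fun p => ∑ q ∈ img.filter (fun q => sec q = p), t q,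
      fun p => Finset.sum_nonneg fun q _ => ht q, ?_⟩
    have key : ∑ p ∈ R, (∑ q ∈ img.filter (fun q => sec q = p), t q) • (-p.1)
        = ∑ q ∈ img, t q • q.1 := by
      rw [← Finset.sum_fiberwise_of_maps_to (g := sec) (fun q hq => hsecR q hq)
        (fun q => t q • q.1)]
      refine Finset.sum_congr rfl fun p _ => ?_
      rw [Finset.sum_smul]
      refine Finset.sum_congr rfl fun q hq => ?_
      obtain ⟨hqimg, hqp⟩ := Finset.mem_filter.mp hq
      have hq1 : q.1 = -p.1 := by
        conv_lhs => rw [← hsecf q hqimg]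
        simp [hf, hqp]
      rw [hq1]
    rw [hyfst, ← key]
    simp [smul_neg]
  · rintro ⟨u, hu, hy⟩
    set t : EE m → ℝ := fun q =>
      (if q = ((0 : Fin m → ℝ), (1 : ℝ)) then 1 else 0)
        + ∑ p ∈ R.filter (fun p => f p = q), u p with htd
    refine ⟨t, fun q => add_nonneg (by split <;> norm_num)
      (Finset.sum_nonneg fun p _ => hu p), ?_⟩
    rw [Finset.sum_insert h01]
    have ht01 : t ((0 : Fin m → ℝ), (1 : ℝ)) = 1 := by
      have hempty : R.filter (fun p => f p = ((0 : Fin m → ℝ), (1 : ℝ))) = ∅ := by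
        apply Finset.filter_false_of_mem
        intro p _ hp
        have := congrArg Prod.snd hp
        simp [hf] at this
      simp [htd, hempty]
    have htq : ∀ q ∈ img, t q = ∑ p ∈ R.filter (fun p => f p = q), u p := by
      intro q hq
      rw [htd]
      have : q ≠ ((0 : Fin m → ℝ), (1 : ℝ)) := fun h => h01 (h ▸ hq)
      simp [this]
    have hsum2 : ∑ q ∈ img, t q • q = ∑ p ∈ R, u p • f p := by
      rw [← Finset.sum_fiberwise_of_maps_to (g := f)
        (fun p hp => Finset.mem_image_of_mem f hp) (fun p => u p • f p)]
      refine Finset.sum_congr rfl fun q hq => ?_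
      rw [htq q hq, Finset.sum_smul]
      refine Finset.sum_congr rfl fun p hp => ?_
      rw [(Finset.mem_filter.mp hp).2]
    have hval : ∑ p ∈ R, u p • f p = ((-∑ p ∈ R, u p • p.1, (0:ℝ)) : EE m) := by
      rw [Prod.ext_iff]
      constructor
      · simp [Prod.fst_sum, hf, smul_neg, Finset.sum_neg_distrib]
      · simp [Prod.snd_sum, hf]
    rw [hsum2, hval, ht01, hy]
    rw [Prod.ext_iff]
    constructor <;> simp
end Main

/-- `cl(ℝ₋·P(R)) = P({(0,1)} ∪ {(-α,0) : (α,c) ∈ R})` when `P(R) ≠ ∅`. -/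
theorem closure_negSmul_polyOf
    (m : ℕ) (hm : 1 ≤ m)
    (R : Finset ((Fin m → ℝ) × ℝ)) (hR : ∀ p ∈ R, 0 ≤ p.2)
    (hne : (polyOf R).Nonempty) :
    closure (negSmul (polyOf R)) =
      polyOf (@insert _ _ (@Finset.instInsert _ (Classical.decEq _))
        ((0 : Fin m → ℝ), (1 : ℝ))
        (@Finset.image _ _ (Classical.decEq _) (fun p => (-p.1, (0 : ℝ))) R)) := by
  classical
  apply Set.Subset.antisymm
  · apply closure_minimal _ (isClosed_polyOf _)
    rintro y ⟨t, ht, x, hx, rfl⟩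
    obtain ⟨s, hs, hxs⟩ := hx
    have hxfst : x = ∑ p ∈ R, s p • p.1 := by
      have := congrArg Prod.fst hxs
      simpa [Prod.fst_sum] using this
    rw [mem_polyOf_negRays]
    refine ⟨fun p => (-t) * s p, fun p => mul_nonneg (neg_nonneg.mpr ht) (hs p), ?_⟩
    rw [hxfst, Finset.smul_sum, ← Finset.sum_neg_distrib]
    refine Finset.sum_congr rfl fun p _ => ?_
    show t • s p • p.1 = -((-t * s p) • p.1)
    rw [neg_mul, neg_smul, neg_neg, mul_smul]
  · intro y hy
    rw [mem_polyOf_negRays] at hy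
    obtain ⟨u, hu, hy⟩ := hy
    obtain ⟨x₀, hx₀⟩ := hne
    obtain ⟨s, hs, hx₀s⟩ := hx₀
    have hx1 : x₀ = ∑ p ∈ R, s p • p.1 := by
      have := congrArg Prod.fst hx₀s
      simpa [Prod.fst_sum] using this
    have hx2 : (1 : ℝ) = ∑ p ∈ R, s p * p.2 := by
      have := congrArg Prod.snd hx₀s
      simpa [Prod.snd_sum, smul_eq_mul] using this
    have hmemseq : ∀ n : ℕ, y - ((1 : ℝ)/(n + 1)) • x₀ ∈ negSmul (polyOf R) := by
      intro n
      set ε : ℝ := (1 : ℝ)/(n + 1) with hε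
      have hε0 : 0 < ε := by positivity
      set c : ℝ := ∑ p ∈ R, u p * p.2 with hc
      have hc0 : 0 ≤ c := Finset.sum_nonneg fun p hp => mul_nonneg (hu p) (hR p hp)
      set T : ℝ := c + ε with hT
      have hT0 : 0 < T := by positivity
      set A : Fin m → ℝ := ∑ p ∈ R, u p • p.1 with hA
      set z : Fin m → ℝ := T⁻¹ • (A + ε • x₀) with hz
      have hsum : ∑ p ∈ R, (u p + ε * s p) • p = ((A + ε • x₀, T) : EE m) := by
        rw [Prod.ext_iff]
        constructor
        · rw [Prod.fst_sum, hA]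
          rw [show ∀ q : Fin m → ℝ, (∑ p ∈ R, u p • p.1) + ε • q = (∑ p ∈ R, u p • p.1) + ε • q from fun _ => rfl]
          rw [hx1, Finset.smul_sum, ← Finset.sum_add_distrib]
          refine Finset.sum_congr rfl fun p _ => ?_
          simp [add_smul, mul_smul]
        · rw [Prod.snd_sum]
          have hstep : ∑ p ∈ R, ((u p + ε * s p) • p).2
              = c + ε * ∑ p ∈ R, s p * p.2 := by
            rw [hc, Finset.mul_sum, ← Finset.sum_add_distrib]
            refine Finset.sum_congr rfl fun p _ => ?_
            simp only [Prod.smul_snd, smul_eq_mul]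
            ring
          rw [hstep, ← hx2, mul_one, hT]
      have hzmem : z ∈ polyOf R := by
        refine ⟨fun p => T⁻¹ * (u p + ε * s p), fun p =>
          mul_nonneg (inv_nonneg.mpr hT0.le)
            (add_nonneg (hu p) (mul_nonneg hε0.le (hs p))), ?_⟩
        have : ∑ p ∈ R, (T⁻¹ * (u p + ε * s p)) • p
            = T⁻¹ • ∑ p ∈ R, (u p + ε * s p) • p := by
          rw [Finset.smul_sum]
          exact Finset.sum_congr rfl fun p _ => by rw [mul_smul]
        rw [this, hsum]
        rw [Prod.ext_iff]
        constructor
        · simp [hz]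
        · simp [Prod.smul_snd, smul_eq_mul, inv_mul_cancel₀ hT0.ne']
      refine ⟨-T, by linarith, z, hzmem, ?_⟩
      rw [hz, smul_smul, neg_mul, mul_inv_cancel₀ hT0.ne', neg_smul, one_smul, neg_add, hy, hA]
      rw [sub_eq_add_neg]
    have htend : Filter.Tendsto (fun n : ℕ => y - ((1 : ℝ)/(n + 1)) • x₀)
        Filter.atTop (nhds y) := by
      have h0 : Filter.Tendsto (fun n : ℕ => (1 : ℝ)/(n + 1)) Filter.atTop (nhds 0) :=
        tendsto_one_div_add_atTop_nhds_zero_nat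
      simpa using Filter.Tendsto.sub (tendsto_const_nhds (x := y)) (h0.smul_const x₀)
    exact mem_closure_of_tendsto htend (Filter.Eventually.of_forall hmemseq)
end
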